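/- Let M > 0 and 0 < δ < 1/2, and define f̃(s) = 1 − (1+s)^{−δ} for s > −1. Then for every s ≥ max{100, 100M}, writing r = r(s), μ = 2M/r(s), and with primes denoting d/ds: (1−μ)^{−1} f̃′′′(s) + (4/r) f̃′′(s) + (μ/r²) f̃′(s) − (2μ/r³)(3 − 4μ) f̃(s) < 0. -/

import Mathlib

open Real

noncomputable section

/-- `r` is the Schwarzschild area-radius of mass `M` in the Regge-Wheeler tortoise
coordinate: `r(s) > 2M`, `r' = 1 - 2M/r`, `r(0) = 3M`. -/
def IsTortoise (M : ℝ) (r : ℝ → ℝ) : Prop :=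
  (∀ s, 2 * M < r s) ∧ (∀ s, HasDerivAt r (1 - 2 * M / r s) s) ∧ r 0 = 3 * M

/-- `μ(s) = 2M / r(s)` -/
def muS (M : ℝ) (r : ℝ → ℝ) (s : ℝ) : ℝ := 2 * M / r s

/-- the multiplier profile `f̃(s) = 1 - (1+s)^{-δ}` (for `s > -1`). -/
def ftilde (δ : ℝ) : ℝ → ℝ := fun s => 1 - (1 + s) ^ (-δ)

lemma hasDerivAt_shift_rpow (p : ℝ) {x : ℝ} (hx : -1 < x) :
    HasDerivAt (fun s : ℝ => (1 + s) ^ p) (p * (1 + x) ^ (p - 1)) x := by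
  have h : HasDerivAt (fun s : ℝ => 1 + s) 1 x := (hasDerivAt_id x).const_add 1
  have := h.rpow_const (p := p) (Or.inl (by linarith))
  simpa [mul_comm] using this

lemma ftilde_hasDerivAt (δ : ℝ) {x : ℝ} (hx : -1 < x) :
    HasDerivAt (ftilde δ) (δ * (1 + x) ^ (-δ - 1)) x := by
  have h := (hasDerivAt_shift_rpow (-δ) hx).const_sub 1
  have e : -(-δ * (1 + x) ^ (-δ - 1)) = δ * (1 + x) ^ (-δ - 1) := by ring
  exact e ▸ h

lemma g1_hasDerivAt (δ : ℝ) {x : ℝ} (hx : -1 < x) :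
    HasDerivAt (fun s : ℝ => δ * (1 + s) ^ (-δ - 1)) (δ * (-δ - 1) * (1 + x) ^ (-δ - 2)) x := by
  have h := (hasDerivAt_shift_rpow (-δ - 1) hx).const_mul δ
  have e : -δ - 1 - 1 = -δ - 2 := by ring
  rw [e] at h
  exact h.congr_deriv (by ring)

lemma g2_hasDerivAt (δ : ℝ) {x : ℝ} (hx : -1 < x) :
    HasDerivAt (fun s : ℝ => δ * (-δ - 1) * (1 + s) ^ (-δ - 2))
      (δ * (-δ - 1) * (-δ - 2) * (1 + x) ^ (-δ - 3)) x := by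
  have h := (hasDerivAt_shift_rpow (-δ - 2) hx).const_mul (δ * (-δ - 1))
  have e : -δ - 2 - 1 = -δ - 3 := by ring
  rw [e] at h
  exact h.congr_deriv (by ring)

lemma deriv_ftilde_eventually (δ : ℝ) {x : ℝ} (hx : -1 < x) :
    deriv (ftilde δ) =ᶠ[nhds x] fun s => δ * (1 + s) ^ (-δ - 1) := by
  filter_upwards [eventually_gt_nhds hx] with y hy
  exact (ftilde_hasDerivAt δ hy).deriv

lemma deriv2_ftilde (δ : ℝ) {x : ℝ} (hx : -1 < x) :
    deriv (deriv (ftilde δ)) x = δ * (-δ - 1) * (1 + x) ^ (-δ - 2) := by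
  rw [(deriv_ftilde_eventually δ hx).deriv_eq]
  exact (g1_hasDerivAt δ hx).deriv

lemma deriv3_ftilde (δ : ℝ) {x : ℝ} (hx : -1 < x) :
    deriv (deriv (deriv (ftilde δ))) x = δ * (-δ - 1) * (-δ - 2) * (1 + x) ^ (-δ - 3) := by
  have h2 : deriv (deriv (ftilde δ)) =ᶠ[nhds x] fun s => δ * (-δ - 1) * (1 + s) ^ (-δ - 2) := by
    filter_upwards [eventually_gt_nhds hx] with y hy
    exact deriv2_ftilde δ hy
  rw [h2.deriv_eq]
  exact (g2_hasDerivAt δ hx).deriv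

set_option maxHeartbeats 2000000 in
/-- The sign computation from the proof of Proposition 8 of the paper: the
coefficient of `φ²` in the modified current `K^{X̃,w^{X̃}}` of the multiplier
`X̃ = f̃(r*) ∂_{r*}` enters with a favorable sign in the far region
`r* ≥ max{100, 100M}`.  Primes denote `d/ds` (derivatives in the tortoise
coordinate). -/
theorem ftilde_coefficient_negative
    (M : ℝ) (hM : 0 < M) (r : ℝ → ℝ) (hr : IsTortoise M r)
    (δ : ℝ) (hδ0 : 0 < δ) (hδ1 : δ < 1 / 2) :
    ∀ s : ℝ, max 100 (100 * M) ≤ s →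
      (1 - muS M r s)⁻¹ * deriv (deriv (deriv (ftilde δ))) s
        + (4 / r s) * deriv (deriv (ftilde δ)) s
        + (muS M r s / (r s) ^ 2) * deriv (ftilde δ) s
        - (2 * muS M r s / (r s) ^ 3) * (3 - 4 * muS M r s) * ftilde δ s < 0 := by
  obtain ⟨h2M, hder, h0⟩ := hr
  have hrpos : ∀ s, 0 < r s := fun s => lt_trans (by linarith) (h2M s)
  -- r is monotone
  have hdiff : Differentiable ℝ r := fun s => (hder s).differentiableAt
  have hmono : StrictMono r := by
    apply strictMono_of_deriv_pos
    intro x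
    rw [(hder x).deriv]
    have : 2 * M / r x < 1 := (div_lt_one (hrpos x)).2 (h2M x)
    linarith
  -- lower bound: r s ≥ 3M + s/3 for s ≥ 0
  have hr0 : ∀ s, 0 ≤ s → 3 * M ≤ r s := fun s hs => h0 ▸ hmono.monotone hs
  have hlow : ∀ s, 0 ≤ s → 3 * M + s / 3 ≤ r s := by
    have hmOn : MonotoneOn (fun s => r s - s / 3) (Set.Ici 0) := by
      apply monotoneOn_of_deriv_nonneg (convex_Ici 0)
      · exact (hdiff.sub (differentiable_id.div_const 3)).continuous.continuousOn
      · exact (hdiff.sub (differentiable_id.div_const 3)).differentiableOn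
      · intro x hx
        rw [interior_Ici] at hx
        have hd : HasDerivAt (fun s => r s - s / 3) ((1 - 2 * M / r x) - 1 / 3) x :=
          (hder x).sub ((hasDerivAt_id x).div_const 3)
        rw [hd.deriv]
        have h3 : 3 * M ≤ r x := hr0 x (le_of_lt hx)
        have : 2 * M / r x ≤ 2 / 3 := by
          rw [div_le_div_iff₀ (hrpos x) (by norm_num)]
          linarith
        linarith
    intro s hs
    have := hmOn (Set.self_mem_Ici) (Set.mem_Ici.2 hs) hs
    simp only [h0] at this
    linarith
  -- upper bound: r s ≤ s + 3M for s ≥ 0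
  have hup : ∀ s, 0 ≤ s → r s ≤ s + 3 * M := by
    have hmOn : MonotoneOn (fun s => s - r s) (Set.Ici 0) := by
      apply monotoneOn_of_deriv_nonneg (convex_Ici 0)
      · exact (differentiable_id.sub hdiff).continuous.continuousOn
      · exact (differentiable_id.sub hdiff).differentiableOn
      · intro x hx
        have hd : HasDerivAt (fun s => s - r s) (1 - (1 - 2 * M / r x)) x :=
          (hasDerivAt_id x).sub (hder x)
        rw [hd.deriv]
        have := div_pos (by linarith : (0:ℝ) < 2 * M) (hrpos x)
        linarith
    intro s hs
    have := hmOn (Set.self_mem_Ici) (Set.mem_Ici.2 hs) hs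
    simp only [h0] at this
    linarith
  intro s hs
  have hs100 : (100:ℝ) ≤ s := le_trans (le_max_left _ _) hs
  have hsM : 100 * M ≤ s := le_trans (le_max_right _ _) hs
  have hs0 : (0:ℝ) ≤ s := by linarith
  have hx : (-1:ℝ) < s := by linarith
  set R := r s with hR
  set A := 1 + s with hA
  have hApos : (0:ℝ) < A := by simp [hA]; linarith
  have hA1 : (1:ℝ) < A := by simp [hA]; linarith
  have hRpos : 0 < R := hrpos s
  have hRlow : 3 * M + s / 3 ≤ R := hlow s hs0
  have hRup : R ≤ s + 3 * M := hup s hs0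
  have hMs : M ≤ s / 100 := by linarith
  -- μ bounds
  set μ := muS M r s with hμdef
  have hμ : μ = 2 * M / R := rfl
  have hμpos : 0 < μ := by rw [hμ]; positivity
  have hμle : μ ≤ 3 / 50 := by
    rw [hμ, div_le_div_iff₀ hRpos (by norm_num)]
    linarith
  have hμlt : μ < 1 := by rw [hμ, div_lt_one hRpos]; exact h2M s
  -- ratio bounds
  have ht1 : 100 * A ≤ 303 * R := by
    have : s ≤ 3 * R := by linarith
    simp only [hA]; linarith
  have ht2 : 100 * R ≤ 103 * A := by
    have : R ≤ s + 3 * (s / 100) := by linarith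
    simp only [hA]; linarith
  -- rewrite derivatives
  rw [deriv3_ftilde δ hx, deriv2_ftilde δ hx, (ftilde_hasDerivAt δ hx).deriv]
  -- B = A^(-δ-3)
  set B : ℝ := A ^ (-δ - 3) with hB
  have hBpos : 0 < B := rpow_pos_of_pos hApos _
  have hB2 : (1 + s) ^ (-δ - 2) = B * A := by
    rw [show (-δ - 2 : ℝ) = (-δ - 3) + 1 by ring, rpow_add_one (ne_of_gt hApos)]
  have hB1 : (1 + s) ^ (-δ - 1) = B * A * A := by
    rw [show (-δ - 1 : ℝ) = (-δ - 3) + 1 + 1 by ring, rpow_add_one (ne_of_gt hApos),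
      rpow_add_one (by positivity : (A:ℝ) ≠ 0)]
  rw [hB2, hB1]
  -- the last term is nonneg
  have hfnn : 0 ≤ ftilde δ s := by
    have : (1 + s) ^ (-δ) < 1 := rpow_lt_one_of_one_lt_of_neg hA1 (by linarith)
    simp only [ftilde]; linarith
  have h4 : 0 ≤ 2 * μ / R ^ 3 * (3 - 4 * μ) * ftilde δ s := by
    apply mul_nonneg (mul_nonneg (by positivity) (by linarith)) hfnn
  clear_value B μ A R
  -- key polynomial inequality
  have key : (δ + 1) * (δ + 2) * R ^ 2 + (1 - μ) * μ * A ^ 2 - 4 * (δ + 1) * (1 - μ) * A * R < 0 := by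
    have k1 : 4 * (δ + 1) * (1 - μ) * ((100/103) * R) * R ≤ 4 * (δ + 1) * (1 - μ) * A * R := by
      have h0 : (0:ℝ) ≤ 4 * (δ + 1) * (1 - μ) := by nlinarith
      have h1 : (100/103 : ℝ) * R ≤ A := by linarith
      have := mul_le_mul_of_nonneg_left h1 h0
      nlinarith [this, hRpos.le]
    have k2 : (1 - μ) * μ * A ^ 2 ≤ (3/50) * ((303/100) * R) ^ 2 := by
      nlinarith [mul_nonneg (mul_nonneg hμpos.le hμpos.le) (sq_nonneg A),
        mul_nonneg (by linarith : (0:ℝ) ≤ 3/50 - μ) (sq_nonneg A),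
        mul_nonneg (by linarith : (0:ℝ) ≤ 303 * R - 100 * A)
          (by linarith : (0:ℝ) ≤ 303 * R + 100 * A)]
    have k3 : (δ + 1) * (δ + 2) * R ^ 2 ≤ (δ + 1) * (5/2) * R ^ 2 := by
      nlinarith [mul_nonneg (mul_nonneg (by linarith : (0:ℝ) ≤ δ + 1)
        (by linarith : (0:ℝ) ≤ 1/2 - δ)) (sq_nonneg R)]
    have k4 : 0 ≤ δ * ((1 - μ) - 47/50) * R ^ 2 :=
      mul_nonneg (mul_nonneg hδ0.le (by linarith)) (sq_nonneg R)
    have k5 : 0 ≤ (3/50 - μ) * R ^ 2 := mul_nonneg (by linarith) (sq_nonneg R)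
    have hR2 : 0 < R ^ 2 := by positivity
    nlinarith [k1, k2, k3, k4, k5, hR2]
  have hne1 : (1:ℝ) - μ ≠ 0 := by linarith
  have hRne : R ≠ 0 := ne_of_gt hRpos
  have expand :
      (1 - μ)⁻¹ * (δ * (-δ - 1) * (-δ - 2) * B) + 4 / R * (δ * (-δ - 1) * (B * A))
        + μ / R ^ 2 * (δ * (B * A * A))
      = δ * B * (((δ + 1) * (δ + 2) * R ^ 2 + (1 - μ) * μ * A ^ 2
          - 4 * (δ + 1) * (1 - μ) * A * R) / ((1 - μ) * R ^ 2)) := by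
    field_simp
    ring
  have main : (1 - μ)⁻¹ * (δ * (-δ - 1) * (-δ - 2) * B) + 4 / R * (δ * (-δ - 1) * (B * A))
      + μ / R ^ 2 * (δ * (B * A * A)) < 0 := by
    rw [expand]
    apply mul_neg_of_pos_of_neg (mul_pos hδ0 hBpos)
    exact div_neg_of_neg_of_pos key (mul_pos (by linarith) (by positivity))
  linarith
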